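/- For N = 3, the stationary points of the reduced system on the fixed-point set {(x,-x,0)} (and its images under cyclic permutation and sign change), namely the six points with y₀ = 0, |y₁| = √(λ₁/3) and cos 3φ₁ = 0 where λ₁ = 1 - 3γ/2, exist if and only if γ < 2/3, and the potential at each of them equals -λ₁²/2 = -(1 - 3γ/2)²/2. -/

import Mathlib

/-!
Summation by parts on `ℤ/Nℤ` turns the derivative of `V_γ` into the gradient
`x_i³ - x_i + (γ/2)(2x_i - x_{i+1} - x_{i-1})`. At `(a, -a, 0)` its components are
`±a(a² - λ₁)` and `0`, with `λ₁ = 1 - 3γ/2`, so the point is critical once `a² = λ₁`, and a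
positive such `a` exists iff `λ₁ > 0`, i.e. `γ < 2/3`. There `V_γ = a⁴/2 - λ₁a² = -λ₁²/2`.
-/

open scoped BigOperators
open Real

/-- The potential `V_γ` on `ℝ^N` with periodic boundary conditions. -/
noncomputable def V (N : ℕ) [NeZero N] (γ : ℝ) (x : EuclideanSpace ℝ (ZMod N)) : ℝ :=
  ∑ i : ZMod N, ((x i) ^ 4 / 4 - (x i) ^ 2 / 2) + γ / 4 * ∑ i : ZMod N, (x (i + 1) - x i) ^ 2

/-- The point `(a, -a, 0) ∈ ℝ³`. -/
noncomputable def ptA (a : ℝ) : EuclideanSpace ℝ (ZMod 3) :=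
  WithLp.toLp 2 (fun i : ZMod 3 => if i = 0 then a else if i = 1 then -a else 0)

theorem ZMod.sum_univ_three {M : Type*} [AddCommMonoid M] (f : ZMod 3 → M) :
    ∑ i, f i = f 0 + f 1 + f 2 :=
  Fin.sum_univ_three f

theorem Fintype.sum_mul_sub_shift {G R : Type*} [AddGroup G] [Fintype G] [CommRing R]
    (c : G) (d v : G → R) :
    ∑ i, d i * (v (i + c) - v i) = ∑ i, (d (i - c) - d i) * v i := by
  have hshift : ∑ i, d i * v (i + c) = ∑ i, d (i - c) * v i :=
    Fintype.sum_equiv (Equiv.addRight c) _ _ fun i => by simp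
  simp only [mul_sub, sub_mul, Finset.sum_sub_distrib, hshift]

theorem hasDerivAt_doubleWell (t : ℝ) :
    HasDerivAt (fun s : ℝ => s ^ 4 / 4 - s ^ 2 / 2) (t ^ 3 - t) t := by
  refine (((hasDerivAt_pow 4 t).div_const 4).sub ((hasDerivAt_pow 2 t).div_const 2)).congr_deriv ?_
  norm_num

section Gradient

variable {N : ℕ} [NeZero N] (γ : ℝ) (x : EuclideanSpace ℝ (ZMod N))

open EuclideanSpace in
theorem hasFDerivAt_V :
    HasFDerivAt (V N γ)
      (∑ i, (x i ^ 3 - x i) • proj i +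
        (γ / 4) • ∑ i, (2 * (x (i + 1) - x i)) • (proj (i + 1) - proj i :
          EuclideanSpace ℝ (ZMod N) →L[ℝ] ℝ)) x := by
  refine HasFDerivAt.add (HasFDerivAt.fun_sum fun i _ => ?_)
    ((HasFDerivAt.fun_sum fun i _ => ?_).const_mul _)
  · exact (hasDerivAt_doubleWell (x i)).comp_hasFDerivAt x (proj (𝕜 := ℝ) i).hasFDerivAt
  · refine ((hasDerivAt_pow 2 _).comp_hasFDerivAt x
      (proj (𝕜 := ℝ) (i + 1) - proj i).hasFDerivAt).congr_fderiv ?_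
    simp

theorem hasGradientAt_V :
    HasGradientAt (V N γ) (WithLp.toLp 2 fun i =>
      x i ^ 3 - x i + γ / 2 * (2 * x i - x (i + 1) - x (i - 1))) x := by
  rw [hasGradientAt_iff_hasFDerivAt]
  refine (hasFDerivAt_V γ x).congr_fderiv ?_
  ext v
  simp only [add_apply, smul_apply, sum_apply, sub_apply, PiLp.proj_apply, smul_eq_mul,
    InnerProductSpace.toDual_apply_apply, PiLp.inner_apply, RCLike.inner_apply, conj_trivial]
  rw [Fintype.sum_mul_sub_shift 1 (fun i => 2 * (x (i + 1) - x i)) v]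
  simp only [sub_add_cancel, Finset.mul_sum, ← Finset.sum_add_distrib]
  refine Finset.sum_congr rfl fun i _ => ?_
  ring

end Gradient

theorem gradient_V_ptA {γ a : ℝ} (ha : a ^ 2 = 1 - 3 * γ / 2) :
    gradient (V 3 γ) (ptA a) = 0 := by
  rw [(hasGradientAt_V γ (ptA a)).gradient]
  ext i
  fin_cases i
  · show a ^ 3 - a + γ / 2 * (2 * a - -a - 0) = 0
    linear_combination a * ha
  · show (-a) ^ 3 - -a + γ / 2 * (2 * -a - 0 - a) = 0
    linear_combination -a * ha
  · show (0 : ℝ) ^ 3 - 0 + γ / 2 * (2 * 0 - a - -a) = 0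
    ring

theorem V_ptA (γ a : ℝ) : V 3 γ (ptA a) = a ^ 4 / 2 - (1 - 3 * γ / 2) * a ^ 2 := by
  rw [V, ZMod.sum_univ_three, ZMod.sum_univ_three]
  show (a ^ 4 / 4 - a ^ 2 / 2) + ((-a) ^ 4 / 4 - (-a) ^ 2 / 2) + ((0 : ℝ) ^ 4 / 4 - 0 ^ 2 / 2) +
    γ / 4 * ((-a - a) ^ 2 + (0 - -a) ^ 2 + (a - 0) ^ 2) = _
  ring

theorem stmt17_general (γ : ℝ) :
    (∃ a : ℝ, 0 < a ∧ a ^ 2 = 1 - 3 * γ / 2 ∧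
        gradient (V 3 γ) (ptA a) = 0 ∧
        V 3 γ (ptA a) = -(1 - 3 * γ / 2) ^ 2 / 2)
      ↔ γ < 2 / 3 := by
  constructor
  · rintro ⟨a, ha, ha2, -, -⟩
    nlinarith [pow_pos ha 2]
  · intro hγ
    have hpos : 0 < 1 - 3 * γ / 2 := by linarith
    obtain ⟨a, ha, ha2⟩ : ∃ a : ℝ, 0 < a ∧ a ^ 2 = 1 - 3 * γ / 2 :=
      ⟨√(1 - 3 * γ / 2), sqrt_pos.mpr hpos, sq_sqrt hpos.le⟩
    refine ⟨a, ha, ha2, gradient_V_ptA ha2, ?_⟩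
    rw [V_ptA, ← ha2]
    ring

/-- for `N = 3`, the stationary points with symmetry `(x,-x,0)`,
given by `a = √(1 - 3γ/2)` (i.e. `a² = λ₁ = 1 - 3γ/2`, `a > 0`), exist iff `γ < 2/3`,
and at each of them the potential equals `-λ₁²/2 = -(1 - 3γ/2)²/2`. -/
theorem stmt17 (γ : ℝ) (hγ : 0 < γ) :
    (∃ a : ℝ, 0 < a ∧ a ^ 2 = 1 - 3 * γ / 2 ∧
        gradient (V 3 γ) (ptA a) = 0 ∧
        V 3 γ (ptA a) = -(1 - 3 * γ / 2) ^ 2 / 2)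
      ↔ γ < 2 / 3 :=
  stmt17_general γ
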